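/- For the concurrent composition Cc(Ĝ, G̃_obs) of the initial-secret subautomaton Ĝ and the observer G̃_obs of the non-secret subautomaton G̃: the system G is strongly K-step opaque (Definition 3.1) with respect to Σ_o and X_S if and only if no state of the form (x, ∅) in Cc(Ĝ, G̃_obs) is reachable from an initial state of Cc(Ĝ, G̃_obs) by a path whose label sequence contains at most K observable events. -/

import Mathlib

namespace SBO

variable {X E : Type}

/-- Extended transition function of an NFA. -/
def ext (δ : X → E → Set X) : X → List E → Set X
  | x, [] => {x}
  | x, σ :: s => ⋃ y ∈ δ x σ, ext δ y s

/-- A run from `x` to `z` labeled by `s`. -/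
def IsRun (δ : X → E → Set X) : X → List E → X → Prop
  | x, [], z => x = z
  | x, σ :: s, z => ∃ y ∈ δ x σ, IsRun δ y s z

/-- A run all of whose states lie in `NS`. -/
def IsNSRun (δ : X → E → Set X) (NS : Set X) : X → List E → X → Prop
  | x, [], z => x = z ∧ x ∈ NS
  | x, σ :: s, z => x ∈ NS ∧ ∃ y ∈ δ x σ, IsNSRun δ NS y s z

/-- Natural projection onto observable events. -/
def proj (Eo : E → Bool) (s : List E) : List E := s.filter Eo

/-- Strong K-step opacity, Definition 3.1 (suffix of the matching run is non-secret). -/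
def KSSO (δ : X → E → Set X) (Eo : E → Bool) (X0 XS : Set X) (K : ℕ) : Prop :=
  ∀ x0 ∈ X0, ∀ s1 s2 : List E, ∀ x1 x2 : X,
    IsRun δ x0 s1 x1 → x1 ∈ XS → IsRun δ x1 s2 x2 → (proj Eo s2).length ≤ K →
    ∃ x0' ∈ X0, ∃ s1' s2' : List E, ∃ x1' x2' : X,
      IsRun δ x0' s1' x1' ∧ IsNSRun δ XSᶜ x1' s2' x2' ∧
      proj Eo s1' = proj Eo s1 ∧ proj Eo s2' = proj Eo s2

/-- Strong K-step opacity, Definition 3.1b (matching run entirely non-secret). -/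
def KSSOb (δ : X → E → Set X) (Eo : E → Bool) (X0 XS : Set X) (K : ℕ) : Prop :=
  ∀ x0 ∈ X0, ∀ s1 s2 : List E, ∀ x1 x2 : X,
    IsRun δ x0 s1 x1 → x1 ∈ XS → IsRun δ x1 s2 x2 → (proj Eo s2).length ≤ K →
    ∃ x0' ∈ X0, ∃ s1' s2' : List E, ∃ x1' x2' : X,
      IsNSRun δ XSᶜ x0' s1' x1' ∧ IsNSRun δ XSᶜ x1' s2' x2' ∧
      proj Eo s1' = proj Eo s1 ∧ proj Eo s2' = proj Eo s2

/-- Standard current-state opacity. -/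
def CSO (δ : X → E → Set X) (Eo : E → Bool) (X0 XS : Set X) : Prop :=
  ∀ x0 ∈ X0, ∀ s : List E, (∃ z ∈ ext δ x0 s, z ∈ XS) →
    ∃ x0' ∈ X0, ∃ s' : List E, proj Eo s' = proj Eo s ∧ ∃ z ∈ ext δ x0' s', z ∈ XSᶜ

/-- Strong current-state opacity. -/
def SCSO (δ : X → E → Set X) (Eo : E → Bool) (X0 XS : Set X) : Prop :=
  ∀ x0 ∈ X0, ∀ s : List E, (∃ z ∈ ext δ x0 s, z ∈ XS) →
    ∃ x0' ∈ X0 \ XS, ∃ t : List E, ∃ x : X, IsNSRun δ XSᶜ x0' t x ∧ proj Eo t = proj Eo s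

/-- Strong initial-state opacity. -/
def SISO (δ : X → E → Set X) (Eo : E → Bool) (X0 XS : Set X) : Prop :=
  ∀ x0 ∈ X0 ∩ XS, ∀ s : List E, (ext δ x0 s).Nonempty →
    ∃ x0' ∈ X0 \ XS, ∃ t : List E, ∃ x : X, IsNSRun δ XSᶜ x0' t x ∧ proj Eo t = proj Eo s

/-- Strong infinite-step opacity. -/
def InfSSO (δ : X → E → Set X) (Eo : E → Bool) (X0 XS : Set X) : Prop :=
  ∀ x0 ∈ X0, ∀ s1 s2 : List E, (ext δ x0 (s1 ++ s2)).Nonempty →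
    (∃ z ∈ ext δ x0 s1, z ∈ XS) →
    ∃ x0' ∈ X0 \ XS, ∃ t : List E, ∃ x : X, IsNSRun δ XSᶜ x0' t x ∧
      proj Eo t = proj Eo (s1 ++ s2)

/-- Observer transition on one observable event (empty set = undefined). -/
def obsStep (δ : X → E → Set X) (Eo : E → Bool) (q : Set X) (σ : E) : Set X :=
  {x' | ∃ x ∈ q, ∃ w : List E, (∀ e ∈ w, Eo e = false) ∧ x' ∈ ext δ x (σ :: w)}

/-- Initial observer state: unobservable reach of the initial states. -/
def obsInit (δ : X → E → Set X) (Eo : E → Bool) (X0 : Set X) : Set X :=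
  {x' | ∃ x ∈ X0, ∃ w : List E, (∀ e ∈ w, Eo e = false) ∧ x' ∈ ext δ x w}

/-- Observer transition extended to observation strings. -/
def obsExt (δ : X → E → Set X) (Eo : E → Bool) : Set X → List E → Set X
  | q, [] => q
  | q, σ :: α => obsExt δ Eo (obsStep δ Eo q σ) α

/-- Synchronous step of `Cc(G, Obs(G))`. -/
def ccStep (δ : X → E → Set X) (Eo : E → Bool) (p p' : X × Set X) : Prop :=
  ∃ σ : E,
    (Eo σ = true ∧ p'.1 ∈ δ p.1 σ ∧ (obsStep δ Eo p.2 σ).Nonempty ∧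
      p'.2 = obsStep δ Eo p.2 σ) ∨
    (Eo σ = false ∧ p'.1 ∈ δ p.1 σ ∧ p'.2 = p.2)

/-- Reachability in `Cc(G, Obs(G))`. -/
def ccReach (δ : X → E → Set X) (Eo : E → Bool) (X0 : Set X) (p : X × Set X) : Prop :=
  ∃ x ∈ obsInit δ Eo X0, Relation.ReflTransGen (ccStep δ Eo) (x, obsInit δ Eo X0) p

/-- Deleting a set of transitions from an NFA. -/
def delTrans (δ : X → E → Set X) (Edel : Set (X × E × X)) : X → E → Set X :=
  fun x σ => {y ∈ δ x σ | (x, σ, y) ∉ Edel}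

/-- Transitions of the non-secret subautomaton (secret states deleted). -/
def δdss (δ : X → E → Set X) (XS : Set X) : X → E → Set X :=
  fun x σ => {y ∈ δ x σ | x ∉ XS ∧ y ∉ XS}

/-- One step of the concurrent composition `Cc(Ĝ, G̃_obs)`. -/
def cc2Step (δ δt : X → E → Set X) (Eo : E → Bool) (p : X × Set X) (σ : E) :
    Set (X × Set X) :=
  if Eo σ then {p' | p'.1 ∈ δ p.1 σ ∧ p'.2 = obsStep δt Eo p.2 σ}
  else {p' | p'.1 ∈ δ p.1 σ ∧ p'.2 = p.2}

/-- Extended transition function of `Cc(Ĝ, G̃_obs)`. -/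
def cc2Ext (δ δt : X → E → Set X) (Eo : E → Bool) : (X × Set X) → List E → Set (X × Set X)
  | p, [] => {p}
  | p, σ :: s => ⋃ p' ∈ cc2Step δ δt Eo p σ, cc2Ext δ δt Eo p' s

/-- Initial states of `Cc(Ĝ, G̃_obs)`. -/
def ccInit (δ : X → E → Set X) (Eo : E → Bool) (X0 XS : Set X) : Set (X × Set X) :=
  {p | ∃ α : List E, (∀ e ∈ α, Eo e = true) ∧
    p.1 ∈ XS ∩ obsExt δ Eo (obsInit δ Eo X0) α ∧
    p.2 = obsExt δ Eo (obsInit δ Eo X0) α ∩ XSᶜ}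

end SBO

open SBO

/-!
Start `Cc(Ĝ, G̃_obs)` in `(x₁, q ∩ X_NS)`, where `x₁` is secret and `q` is the observer state
reached along `P(s₁)`. After `s₂` its second component is exactly the set of ends of non-secret
runs `x₁' --s₂'--> x₂'` with `P(s₂') = P(s₂)` whose start is reachable from `X₀` along some `s₁'`
with `P(s₁') = P(s₁)`. So the witnesses demanded by strong `K`-step opacity exist exactly when
that component cannot become `∅` within `K` observations.
-/

namespace SBO

variable {X E : Type}

section Runs

variable {δ : X → E → Set X}

theorem mem_ext_iff_isRun : ∀ {s : List E} {x z : X}, z ∈ ext δ x s ↔ IsRun δ x s z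
  | [], x, z => by simp [ext, IsRun, eq_comm]
  | σ :: s, x, z => by simp [ext, IsRun, mem_ext_iff_isRun]

theorem mem_ext_append :
    ∀ {s t : List E} {x z : X}, z ∈ ext δ x (s ++ t) ↔ ∃ y ∈ ext δ x s, z ∈ ext δ y t
  | [], t, x, z => by simp [ext]
  | σ :: s, t, x, z => by
    simp only [List.cons_append, ext, Set.mem_iUnion, exists_prop, mem_ext_append]
    grind

theorem mem_ext_concat {s : List E} {σ : E} {x y z : X} (hy : y ∈ ext δ x s)
    (hz : z ∈ δ y σ) : z ∈ ext δ x (s ++ [σ]) :=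
  mem_ext_append.mpr ⟨y, hy, by simpa [ext] using hz⟩

theorem isNSRun_compl_iff {XS : Set X} :
    ∀ {s : List E} {x z : X}, IsNSRun δ XSᶜ x s z ↔ x ∉ XS ∧ z ∈ ext (δdss δ XS) x s
  | [], x, z => by simp [IsNSRun, ext, eq_comm, and_comm]
  | σ :: s, x, z => by
    simp only [IsNSRun, ext, δdss, isNSRun_compl_iff, Set.mem_compl_iff, Set.mem_iUnion,
      exists_prop]
    grind

end Runs

section Projection

variable {Eo : E → Bool}

theorem proj_append (s t : List E) : proj Eo (s ++ t) = proj Eo s ++ proj Eo t :=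
  List.filter_append ..

theorem proj_eq_nil {w : List E} (hw : ∀ e ∈ w, Eo e = false) : proj Eo w = [] := by
  simpa [proj, List.filter_eq_nil_iff] using hw

theorem observable_of_mem_proj {s : List E} {σ : E} (h : σ ∈ proj Eo s) : Eo σ = true :=
  (List.mem_filter.mp h).2

end Projection

section Observer

variable {δ : X → E → Set X} {Eo : E → Bool}

def IsUnobsClosed (δ : X → E → Set X) (Eo : E → Bool) (q : Set X) : Prop :=
  ∀ x ∈ q, ∀ σ, Eo σ = false → δ x σ ⊆ q

theorem isUnobsClosed_obsStep (q : Set X) (σ : E) : IsUnobsClosed δ Eo (obsStep δ Eo q σ) := by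
  rintro y ⟨x, hx, w, hw, hy⟩ τ hτ z hz
  refine ⟨x, hx, w ++ [τ], ?_, by simpa using mem_ext_concat hy hz⟩
  simpa [or_imp, forall_and, hτ] using hw

theorem isUnobsClosed_obsInit (X0 : Set X) : IsUnobsClosed δ Eo (obsInit δ Eo X0) := by
  rintro y ⟨x, hx, w, hw, hy⟩ τ hτ z hz
  refine ⟨x, hx, w ++ [τ], ?_, mem_ext_concat hy hz⟩
  simpa [or_imp, forall_and, hτ] using hw

theorem IsUnobsClosed.obsExt {q : Set X} (hq : IsUnobsClosed δ Eo q) :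
    ∀ α : List E, IsUnobsClosed δ Eo (obsExt δ Eo q α)
  | [] => hq
  | σ :: α => (isUnobsClosed_obsStep q σ).obsExt α

theorem IsUnobsClosed.inter_compl {q : Set X} (hq : IsUnobsClosed δ Eo q) (XS : Set X) :
    IsUnobsClosed (δdss δ XS) Eo (q ∩ XSᶜ) :=
  fun x hx σ hσ _ ⟨hy, _, hyS⟩ => ⟨hq x hx.1 σ hσ hy, hyS⟩

theorem obsExt_append (q : Set X) :
    ∀ α β : List E, obsExt δ Eo q (α ++ β) = obsExt δ Eo (obsExt δ Eo q α) β
  | [], _ => rfl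
  | σ :: α, β => obsExt_append (obsStep δ Eo q σ) α β

-- Closure of `q` is what absorbs the unobservable events of `t` before its first observation.
theorem mem_obsExt_proj {q : Set X} (hq : IsUnobsClosed δ Eo q) :
    ∀ {t : List E} {x z : X}, x ∈ q → z ∈ ext δ x t → z ∈ obsExt δ Eo q (proj Eo t)
  | [], x, z, hx, hz => by simp_all [ext, proj, obsExt]
  | σ :: t, x, z, hx, hz => by
    simp only [ext, Set.mem_iUnion, exists_prop] at hz
    obtain ⟨y, hy, hz⟩ := hz
    cases hσ : Eo σ
    · simpa [proj, hσ] using mem_obsExt_proj hq (hq x hx σ hσ hy) hz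
    · have hy' : y ∈ obsStep δ Eo q σ := ⟨x, hx, [], by simp, by simpa [ext] using hy⟩
      simpa [proj, hσ, obsExt] using mem_obsExt_proj (isUnobsClosed_obsStep q σ) hy' hz

theorem exists_mem_ext_of_mem_obsExt :
    ∀ {β : List E}, (∀ σ ∈ β, Eo σ = true) → ∀ {q : Set X} {z : X},
      z ∈ obsExt δ Eo q β → ∃ x ∈ q, ∃ t, proj Eo t = β ∧ z ∈ ext δ x t
  | [], _, q, z, hz => ⟨z, hz, [], rfl, rfl⟩
  | σ :: β, hβ, q, z, hz => by
    obtain ⟨y, ⟨x, hx, w, hw, hy⟩, t, ht, hz⟩ :=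
      exists_mem_ext_of_mem_obsExt (fun τ hτ => hβ τ (List.mem_cons_of_mem σ hτ)) hz
    refine ⟨x, hx, σ :: w ++ t, ?_, mem_ext_append.mpr ⟨y, hy, hz⟩⟩
    rw [proj_append, ht]
    simpa [proj, hβ σ List.mem_cons_self] using proj_eq_nil hw

theorem mem_obsExt_obsInit_iff {X0 : Set X} {α : List E} (hα : ∀ σ ∈ α, Eo σ = true)
    {z : X} :
    z ∈ obsExt δ Eo (obsInit δ Eo X0) α ↔ ∃ x0 ∈ X0, ∃ s, IsRun δ x0 s z ∧ proj Eo s = α := by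
  constructor
  · intro hz
    obtain ⟨y, ⟨x0, hx0, w, hw, hy⟩, t, ht, hz⟩ := exists_mem_ext_of_mem_obsExt hα hz
    refine ⟨x0, hx0, w ++ t, mem_ext_iff_isRun.mp (mem_ext_append.mpr ⟨y, hy, hz⟩), ?_⟩
    rw [proj_append, proj_eq_nil hw, ht, List.nil_append]
  · rintro ⟨x0, hx0, s, hs, rfl⟩
    exact mem_obsExt_proj (isUnobsClosed_obsInit X0) ⟨x0, hx0, [], by simp, rfl⟩
      (mem_ext_iff_isRun.mpr hs)

end Observer

section Composition

variable {δ : X → E → Set X} {Eo : E → Bool}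

theorem mem_obsExt_obsInit_inter_compl_iff {X0 XS : Set X} {α β : List E}
    (hα : ∀ σ ∈ α, Eo σ = true) (hβ : ∀ σ ∈ β, Eo σ = true) {z : X} :
    z ∈ obsExt (δdss δ XS) Eo (obsExt δ Eo (obsInit δ Eo X0) α ∩ XSᶜ) β ↔
      ∃ x0 ∈ X0, ∃ s1 s2 : List E, ∃ x1 : X, IsRun δ x0 s1 x1 ∧ IsNSRun δ XSᶜ x1 s2 z ∧
        proj Eo s1 = α ∧ proj Eo s2 = β := by
  constructor
  · intro hz
    obtain ⟨x1, ⟨hx1, hx1S⟩, s2, hs2, hx1z⟩ := exists_mem_ext_of_mem_obsExt hβ hz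
    obtain ⟨x0, hx0, s1, hs1, rfl⟩ := (mem_obsExt_obsInit_iff hα).mp hx1
    exact ⟨x0, hx0, s1, s2, x1, hs1, isNSRun_compl_iff.mpr ⟨hx1S, hx1z⟩, rfl, hs2⟩
  · rintro ⟨x0, hx0, s1, s2, x1, hs1, hs2, rfl, rfl⟩
    obtain ⟨hx1S, hz⟩ := isNSRun_compl_iff.mp hs2
    have hx1 := (mem_obsExt_obsInit_iff hα).mpr ⟨x0, hx0, s1, hs1, rfl⟩
    exact mem_obsExt_proj (((isUnobsClosed_obsInit X0).obsExt _).inter_compl XS) ⟨hx1, hx1S⟩ hz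

theorem mem_cc2Step_iff {δt : X → E → Set X} {p p' : X × Set X} {σ : E} :
    p' ∈ cc2Step δ δt Eo p σ ↔ p'.1 ∈ δ p.1 σ ∧ p'.2 = obsExt δt Eo p.2 (proj Eo [σ]) := by
  cases hσ : Eo σ <;> simp [cc2Step, proj, obsExt, hσ]

theorem mem_cc2Ext_iff {δt : X → E → Set X} :
    ∀ {e : List E} {x y : X} {q q' : Set X},
      (y, q') ∈ cc2Ext δ δt Eo (x, q) e ↔ y ∈ ext δ x e ∧ q' = obsExt δt Eo q (proj Eo e)
  | [], x, y, q, q' => by simp [cc2Ext, ext, proj, obsExt]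
  | σ :: e, x, y, q, q' => by
    rw [← List.singleton_append, proj_append, obsExt_append]
    simp only [cc2Ext, ext, Set.mem_iUnion, exists_prop, mem_cc2Step_iff, Prod.exists,
      mem_cc2Ext_iff, List.singleton_append]
    grind

end Composition

end SBO

open SBO

/-- Theorem 3.1: G is K-SSO (Definition 3.1) iff no state of the form
`(·, ∅)` of `Cc(Ĝ, G̃_obs)` is reachable from an initial state by a path with at most
K observable events. -/
theorem KSSO_iff_cc {X E : Type} (δ : X → E → Set X) (Eo : E → Bool)
    (X0 XS : Set X) (K : ℕ) :
    KSSO δ Eo X0 XS K ↔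
      ¬ ∃ p0 ∈ ccInit δ Eo X0 XS, ∃ e : List E, (proj Eo e).length ≤ K ∧
        ∃ y : X, (y, (∅ : Set X)) ∈ cc2Ext δ (δdss δ XS) Eo p0 e := by
  have hproj (s : List E) : ∀ σ ∈ proj Eo s, Eo σ = true := fun _ => observable_of_mem_proj
  constructor
  · rintro hK ⟨⟨x1, _⟩, ⟨α, hα, ⟨hx1S, hx1⟩, rfl⟩, e, hlen, y, hy⟩
    obtain ⟨hx1y, hempty⟩ := mem_cc2Ext_iff.mp hy
    obtain ⟨x0, hx0, s1, hs1, rfl⟩ := (mem_obsExt_obsInit_iff hα).mp hx1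
    obtain ⟨x0', hx0', s1', s2', x1', x2', hs1', hs2', hp1, hp2⟩ :=
      hK x0 hx0 s1 e x1 y hs1 hx1S (mem_ext_iff_isRun.mp hx1y) hlen
    have hx2' := (mem_obsExt_obsInit_inter_compl_iff hα (hproj e)).mpr
      ⟨x0', hx0', s1', s2', x1', hs1', hs2', hp1, hp2⟩
    rwa [← hempty] at hx2'
  · intro hcc x0 hx0 s1 s2 x1 x2 hs1 hx1S hs2 hlen
    by_contra hK
    apply hcc
    have hx1 := (mem_obsExt_obsInit_iff (hproj s1)).mpr ⟨x0, hx0, s1, hs1, rfl⟩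
    refine ⟨_, ⟨proj Eo s1, hproj s1, ⟨hx1S, hx1⟩, rfl⟩, s2, hlen, x2,
      mem_cc2Ext_iff.mpr ⟨mem_ext_iff_isRun.mpr hs2, ?_⟩⟩
    refine (Set.eq_empty_of_forall_notMem fun z hz => hK ?_).symm
    obtain ⟨x0', hx0', s1', s2', x1', hs1', hs2', hp1, hp2⟩ :=
      (mem_obsExt_obsInit_inter_compl_iff (hproj s1) (hproj s2)).mp hz
    exact ⟨x0', hx0', s1', s2', x1', z, hs1', hs2', hp1, hp2⟩
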